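/- Let M be a compact metric space, μ a finite regular Borel measure on M, and q > 0. Suppose (K_n) is a sequence of nonempty compact subsets of M converging in the Hausdorff metric to a compact set K, (ε_n) is a sequence of positive reals converging to 0, and (B_n) is a sequence of Borel sets with B_n ⊆ N_{ε_n}(K_n) and μ(B_n) ≥ q for every n. Then μ(K) ≥ q. -/
import Mathlib


open MeasureTheory

theorem stmt_9 {M : Type*} [MetricSpace M] [CompactSpace M]
    [MeasurableSpace M] [BorelSpace M]
    (μ : Measure M) [IsFiniteMeasure μ] [μ.OuterRegular]
    (q : ℝ) (hq : 0 < q)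
    (K : ℕ → Set M) (hKc : ∀ n, IsCompact (K n)) (hKne : ∀ n, (K n).Nonempty)
    (Klim : Set M) (hKlimc : IsCompact Klim)
    (hconv : Filter.Tendsto (fun n => EMetric.hausdorffEdist (K n) Klim)
      Filter.atTop (nhds 0))
    (ε : ℕ → ℝ) (hε : ∀ n, 0 < ε n)
    (hε0 : Filter.Tendsto ε Filter.atTop (nhds 0))
    (B : ℕ → Set M) (hB : ∀ n, MeasurableSet (B n))
    (hBsub : ∀ n, B n ⊆ Metric.thickening (ε n) (K n))
    (hBq : ∀ n, ENNReal.ofReal q ≤ μ (B n)) :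
    ENNReal.ofReal q ≤ μ Klim := by
  by_contra hlt
  push_neg at hlt
  obtain ⟨U, hUsub, hUopen, hUμ⟩ :=
    Set.exists_isOpen_lt_of_lt Klim (ENNReal.ofReal q) hlt
  obtain ⟨δ, hδ, hthick⟩ :=
    hKlimc.exists_thickening_subset_open hUopen hUsub
  have hε' : ∀ᶠ n in Filter.atTop, ε n < δ / 2 :=
    hε0.eventually (eventually_lt_nhds (by linarith))
  have hconv' : ∀ᶠ n in Filter.atTop,
      EMetric.hausdorffEdist (K n) Klim < ENNReal.ofReal (δ / 2) := by
    refine hconv.eventually (Filter.Tendsto.eventually_lt_const ?_ Filter.tendsto_id)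
    simp [ENNReal.ofReal_pos]; linarith
  obtain ⟨n, h1, h2⟩ := (hε'.and hconv').exists
  have hsub : Metric.thickening (ε n) (K n) ⊆ Metric.thickening δ Klim := by
    intro x hx
    rw [Metric.mem_thickening_iff_infEdist_lt] at hx ⊢
    calc EMetric.infEdist x Klim
        ≤ EMetric.infEdist x (K n) + EMetric.hausdorffEdist (K n) Klim :=
          EMetric.infEdist_le_infEdist_add_hausdorffEdist
      _ < ENNReal.ofReal (ε n) + ENNReal.ofReal (δ / 2) :=
          ENNReal.add_lt_add hx h2
      _ ≤ ENNReal.ofReal (δ / 2) + ENNReal.ofReal (δ / 2) := by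
          gcongr <;> exact h1.le
      _ = ENNReal.ofReal δ := by
          rw [← ENNReal.ofReal_add (by linarith) (by linarith)]; ring_nf
  have : ENNReal.ofReal q ≤ μ U :=
    (hBq n).trans (measure_mono ((hBsub n).trans (hsub.trans hthick)))
  exact absurd hUμ (not_lt.2 this)
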